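/- arXiv:1210.2346 — 5 statements merged into one kernel-verified Lean document; each statement's English description precedes it below -/
import Mathlib

section
/- Let Y be a finite nonempty set, f : Y → ℝ, ℓ : Y → ℝ, y₀ ∈ Y, and ε > 0. If y* ∈ Y maximizes f over Y, then ℓ(y*) ≤ ε·log(∑_{ŷ∈Y} exp((ℓ(ŷ) + f(ŷ))/ε)) − f(y₀); i.e., the extended log-loss upper bounds the true loss incurred by the maximizing prediction. -/
open Finset Real

theorem le_mul_log_sum_exp_div {ι : Type*} {s : Finset ι} {i : ι} (hi : i ∈ s) (g : ι → ℝ)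
    {ε : ℝ} (hε : 0 < ε) : g i ≤ ε * log (∑ j ∈ s, exp (g j / ε)) := by
  have hterm : exp (g i / ε) ≤ ∑ j ∈ s, exp (g j / ε) :=
    single_le_sum (f := fun j => exp (g j / ε)) (fun j _ => (exp_pos _).le) hi
  have hlog : g i / ε ≤ log (∑ j ∈ s, exp (g j / ε)) :=
    (le_log_iff_exp_le ((exp_pos _).trans_le hterm)).mpr hterm
  rwa [div_le_iff₀' hε] at hlog

theorem extended_log_loss_upper_bounds_true_loss_general {Y : Type*} [Fintype Y]
    (f ℓ : Y → ℝ) (y₀ ystar : Y) (ε : ℝ) (hε : 0 < ε) (hstar : ∀ y, f y ≤ f ystar) :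
    ℓ ystar ≤ ε * Real.log (∑ yhat, Real.exp ((ℓ yhat + f yhat) / ε)) - f y₀ := by
  have hsoftmax := le_mul_log_sum_exp_div (mem_univ ystar) (fun y => ℓ y + f y) hε
  linarith [hstar y₀]

/-- The extended log-loss upper bounds the true loss of the
maximizing prediction: if `y*` maximizes `f` and `ε > 0`, then
`ℓ(y*) ≤ ε·log(∑_{yhat} exp((ℓ(yhat)+f(yhat))/ε)) − f(y₀)`. -/
theorem extended_log_loss_upper_bounds_true_loss {Y : Type*} [Fintype Y] [Nonempty Y]
    (f ℓ : Y → ℝ) (y₀ ystar : Y) (ε : ℝ) (hε : 0 < ε) (hstar : ∀ y, f y ≤ f ystar) :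
    ℓ ystar ≤ ε * Real.log (∑ yhat, Real.exp ((ℓ yhat + f yhat) / ε)) - f y₀ :=
  extended_log_loss_upper_bounds_true_loss_general f ℓ y₀ ystar ε hε hstar
end

section
/- Let V be a finite nonempty index set, L a finite nonempty label type, 𝓡 a region family covering V with potentials θ_r : Y_r → ℝ, and ε > 0. Let a_r : Y_r → ℝ (r ∈ 𝓡) be any adjustment functions satisfying ∑_{r∈𝓡} a_r(y|_r) = 0 for every joint label y : V → L. Then ε·log( ∑_{y : V → L} exp( (∑_{r∈𝓡} θ_r(y|_r)) / ε ) ) ≤ ∑_{r∈𝓡} ε·log( ∑_{z ∈ Y_r} exp( (θ_r(z) + a_r(z)) / ε ) ). In particular, the extended log-loss over joint labels is upper bounded by the sum of the low-dimensional region losses for any reparametrization whose adjustments telescope to zero. -/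
/-!
Since the regions cover `V`, a joint label is determined by its restrictions to the regions, so
`y ↦ (y|_r)_r` embeds the joint labels into the families of partial labels. Expanding
`∏_r ∑_z g_r(z)` as a sum over such families, the joint sum `∑_y ∏_r g_r(y|_r)` is a sub-sum of it
whenever `g ≥ 0`. Because the adjustments telescope to zero, `exp((∑_r θ_r(y|_r))/ε)` factors as
`∏_r exp((θ_r + a_r)(y|_r)/ε)`; taking `ε·log` gives the bound.
-/

open Finset Function

theorem Fintype.sum_comp_le_sum_of_injective {α β M : Type*} [Fintype α] [Fintype β]
    [AddCommMonoid M] [PartialOrder M] [IsOrderedAddMonoid M] {f : α → β} (hf : Injective f)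
    {g : β → M} (hg : ∀ b, 0 ≤ g b) :
    ∑ a, g (f a) ≤ ∑ b, g b := by
  simpa only [sum_map, Embedding.coeFn_mk] using
    sum_le_univ_sum_of_nonneg (s := univ.map ⟨f, hf⟩) hg

section Regions

variable {V L : Type*} (𝓡 : Finset (Finset V))

theorem restrict_injective_of_cover (hcover : ∀ i : V, ∃ r ∈ 𝓡, i ∈ r) :
    Injective fun (y : V → L) (r : 𝓡) (i : ↥(r : Finset V)) => y i := by
  intro y y' h
  funext i
  obtain ⟨r, hr, hir⟩ := hcover i
  exact congrFun (congrFun h ⟨r, hr⟩) ⟨i, hir⟩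

variable [Fintype V] [DecidableEq V] [Fintype L]

theorem sum_prod_restrict_le_prod_sum {R : Type*} [CommSemiring R] [PartialOrder R]
    [IsOrderedRing R] (hcover : ∀ i : V, ∃ r ∈ 𝓡, i ∈ r)
    (g : (r : Finset V) → (↥r → L) → R) (hg : ∀ r z, 0 ≤ g r z) :
    ∑ y : V → L, ∏ r ∈ 𝓡, g r (fun i => y i) ≤ ∏ r ∈ 𝓡, ∑ z, g r z := by
  calc ∑ y : V → L, ∏ r ∈ 𝓡, g r (fun i => y i)
      = ∑ y : V → L, ∏ r : 𝓡, g r (fun i => y i) :=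
        sum_congr rfl fun y _ => (prod_coe_sort 𝓡 fun r => g r fun i => y i).symm
    _ ≤ ∑ p : (r : 𝓡) → (↥(r : Finset V) → L), ∏ r : 𝓡, g r (p r) :=
        Fintype.sum_comp_le_sum_of_injective (restrict_injective_of_cover 𝓡 hcover)
          fun p => prod_nonneg fun r _ => hg _ (p r)
    _ = ∏ r : 𝓡, ∑ z, g r z := (Fintype.prod_sum _).symm
    _ = ∏ r ∈ 𝓡, ∑ z, g r z := prod_coe_sort 𝓡 fun r => ∑ z, g r z

theorem log_sum_prod_restrict_le_sum_log_sum [Nonempty L] (hcover : ∀ i : V, ∃ r ∈ 𝓡, i ∈ r)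
    (g : (r : Finset V) → (↥r → L) → ℝ) (hg : ∀ r z, 0 < g r z) :
    Real.log (∑ y : V → L, ∏ r ∈ 𝓡, g r (fun i => y i)) ≤
      ∑ r ∈ 𝓡, Real.log (∑ z, g r z) := by
  rw [← Real.log_prod fun r _ => (sum_pos (fun z _ => hg r z) univ_nonempty).ne']
  exact Real.log_le_log (sum_pos (fun y _ => prod_pos fun r _ => hg r _) univ_nonempty)
    (sum_prod_restrict_le_prod_sum 𝓡 hcover g fun r z => (hg r z).le)

end Regions

theorem region_decomposed_softmax_bound_general {V L : Type*} [Fintype V] [DecidableEq V]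
    [Fintype L] [Nonempty L]
    (𝓡 : Finset (Finset V)) (hcover : ∀ i : V, ∃ r ∈ 𝓡, i ∈ r)
    (θ : (r : Finset V) → (↥r → L) → ℝ)
    (ε : ℝ) (hε : 0 < ε)
    (a : (r : Finset V) → (↥r → L) → ℝ)
    (ha : ∀ y : V → L, ∑ r ∈ 𝓡, a r (fun i => y i) = 0) :
    ε * Real.log (∑ y : V → L, Real.exp ((∑ r ∈ 𝓡, θ r (fun i => y i)) / ε)) ≤
      ∑ r ∈ 𝓡, ε * Real.log (∑ z : ↥r → L, Real.exp ((θ r z + a r z) / ε)) := by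
  have hfactor : ∀ y : V → L, Real.exp ((∑ r ∈ 𝓡, θ r (fun i => y i)) / ε) =
      ∏ r ∈ 𝓡, Real.exp ((θ r (fun i => y i) + a r (fun i => y i)) / ε) := by
    intro y
    rw [← Real.exp_sum, ← sum_div, sum_add_distrib, ha y, add_zero]
  simp_rw [hfactor, ← mul_sum]
  exact mul_le_mul_of_nonneg_left
    (log_sum_prod_restrict_le_sum_log_sum 𝓡 hcover (fun r z => Real.exp ((θ r z + a r z) / ε))
      fun r z => Real.exp_pos _) hε.le

/-- For a region family `𝓡` covering `V`, potentials `θ_r`, `ε > 0`,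
and adjustments `a_r` telescoping to zero on every joint label, the extended log-loss
over joint labels is upper bounded by the sum of the low-dimensional region losses:
`ε·log(∑_y exp((∑_r θ_r(y|_r))/ε)) ≤ ∑_r ε·log(∑_{z ∈ Y_r} exp((θ_r(z)+a_r(z))/ε))`. -/
theorem region_decomposed_softmax_bound {V L : Type*} [Fintype V] [Nonempty V] [DecidableEq V]
    [Fintype L] [Nonempty L]
    (𝓡 : Finset (Finset V)) (hcover : ∀ i : V, ∃ r ∈ 𝓡, i ∈ r)
    (θ : (r : Finset V) → (↥r → L) → ℝ)
    (ε : ℝ) (hε : 0 < ε)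
    (a : (r : Finset V) → (↥r → L) → ℝ)
    (ha : ∀ y : V → L, ∑ r ∈ 𝓡, a r (fun i => y i) = 0) :
    ε * Real.log (∑ y : V → L, Real.exp ((∑ r ∈ 𝓡, θ r (fun i => y i)) / ε)) ≤
      ∑ r ∈ 𝓡, ε * Real.log (∑ z : ↥r → L, Real.exp ((θ r z + a r z) / ε)) :=
  region_decomposed_softmax_bound_general 𝓡 hcover θ ε hε a ha
end

section
/- Let V be a finite nonempty index set, L a finite nonempty label type, 𝓡 a region family with potentials θ_r : Y_r → ℝ, and let c_r > 0 (r ∈ 𝓡) be coefficients that fractionally cover V, i.e., ∑_{r∈𝓡, i∈r} c_r ≥ 1 for every i ∈ V. Then ∑_{y : V → L} ∏_{r∈𝓡} exp(θ_r(y|_r)) ≤ ∏_{r∈𝓡} ( ∑_{z ∈ Y_r} exp(θ_r(z)/c_r) )^{c_r}. -/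
open Finset

/-- For `W ≥ 1` and nonneg `f`, `∑ f^W ≤ (∑ f)^W`. -/
lemma sum_rpow_le_rpow_sum'' {ι : Type*} (s : Finset ι) (f : ι → ℝ) (hf : ∀ i ∈ s, 0 ≤ f i)
    {W : ℝ} (hW : 1 ≤ W) : ∑ i ∈ s, f i ^ W ≤ (∑ i ∈ s, f i) ^ W := by
  set U := ∑ i ∈ s, f i with hU
  have hU0 : 0 ≤ U := Finset.sum_nonneg hf
  rcases eq_or_lt_of_le hU0 with h0 | hpos
  · have hall : ∀ i ∈ s, f i = 0 := by
      intro i hi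
      exact (Finset.sum_eq_zero_iff_of_nonneg hf).1 h0.symm i hi
    have : ∑ i ∈ s, f i ^ W = 0 := by
      apply Finset.sum_eq_zero
      intro i hi
      rw [hall i hi, Real.zero_rpow (by linarith)]
    rw [this]
    exact Real.rpow_nonneg hU0 W
  · have hstep : ∀ i ∈ s, f i ^ W ≤ U ^ (W - 1) * f i := by
      intro i hi
      rcases eq_or_lt_of_le (hf i hi) with h0 | hfi
      · rw [← h0, Real.zero_rpow (by linarith), mul_zero]
      · have hle : f i ≤ U := Finset.single_le_sum hf hi
        calc f i ^ W = f i ^ (W - 1) * f i := by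
              rw [← Real.rpow_add_one (ne_of_gt hfi)]; ring_nf
          _ ≤ U ^ (W - 1) * f i :=
              mul_le_mul_of_nonneg_right
                (Real.rpow_le_rpow (le_of_lt hfi) hle (by linarith)) (hf i hi)
    calc ∑ i ∈ s, f i ^ W ≤ ∑ i ∈ s, U ^ (W - 1) * f i := Finset.sum_le_sum hstep
      _ = U ^ (W - 1) * U := by rw [← Finset.mul_sum]
      _ = U ^ W := by rw [← Real.rpow_add_one (ne_of_gt hpos)]; ring_nf

/-- Generalized Hölder with weights summing to one. -/
lemma holder_sum_one {ι κ : Type*} (A : Finset ι) (T : Finset κ) (w : ι → ℝ) (x : ι → κ → ℝ)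
    (hw : ∀ a ∈ A, 0 ≤ w a) (hw1 : ∑ a ∈ A, w a = 1)
    (hx : ∀ a ∈ A, ∀ t ∈ T, 0 ≤ x a t) :
    ∑ t ∈ T, ∏ a ∈ A, x a t ^ w a ≤ ∏ a ∈ A, (∑ t ∈ T, x a t) ^ w a := by
  set S : ι → ℝ := fun a => ∑ t ∈ T, x a t with hS
  have hS0 : ∀ a ∈ A, 0 ≤ S a := fun a ha => Finset.sum_nonneg (hx a ha)
  by_cases hz : ∃ a ∈ A, S a = 0 ∧ w a ≠ 0
  · rcases hz with ⟨a, ha, hSa, hwa⟩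
    have hxa : ∀ t ∈ T, x a t = 0 := by
      intro t ht
      exact (Finset.sum_eq_zero_iff_of_nonneg (hx a ha)).1 hSa t ht
    have hL : ∑ t ∈ T, ∏ b ∈ A, x b t ^ w b = 0 := by
      apply Finset.sum_eq_zero
      intro t ht
      apply Finset.prod_eq_zero ha
      rw [hxa t ht, Real.zero_rpow hwa]
    have hR : ∏ b ∈ A, (S b) ^ w b = 0 := by
      apply Finset.prod_eq_zero ha
      rw [hSa, Real.zero_rpow hwa]
    rw [hL, hR]
  · push_neg at hz
    -- every a with w a ≠ 0 has S a > 0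
    have key : ∀ t ∈ T, ∏ a ∈ A, x a t ^ w a
        = (∏ a ∈ A, S a ^ w a) * ∏ a ∈ A, (x a t / S a) ^ w a := by
      intro t ht
      rw [← Finset.prod_mul_distrib]
      apply Finset.prod_congr rfl
      intro a ha
      by_cases hwa : w a = 0
      · simp [hwa]
      · have hSa : S a ≠ 0 := fun h => hwa (hz a ha h)
        rw [← Real.mul_rpow (hS0 a ha) (div_nonneg (hx a ha t ht) (hS0 a ha)),
          mul_div_cancel₀ _ hSa]
    have hAM : ∀ t ∈ T, ∏ a ∈ A, (x a t / S a) ^ w a ≤ ∑ a ∈ A, w a * (x a t / S a) := by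
      intro t ht
      exact Real.geom_mean_le_arith_mean_weighted A w _ hw hw1
        (fun a ha => div_nonneg (hx a ha t ht) (hS0 a ha))
    have hP0 : 0 ≤ ∏ a ∈ A, S a ^ w a :=
      Finset.prod_nonneg fun a ha => Real.rpow_nonneg (hS0 a ha) _
    calc ∑ t ∈ T, ∏ a ∈ A, x a t ^ w a
        = (∏ a ∈ A, S a ^ w a) * ∑ t ∈ T, ∏ a ∈ A, (x a t / S a) ^ w a := by
          rw [Finset.mul_sum]; exact Finset.sum_congr rfl key
      _ ≤ (∏ a ∈ A, S a ^ w a) * ∑ t ∈ T, ∑ a ∈ A, w a * (x a t / S a) := by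
          apply mul_le_mul_of_nonneg_left _ hP0
          exact Finset.sum_le_sum hAM
      _ ≤ (∏ a ∈ A, S a ^ w a) * 1 := by
          apply mul_le_mul_of_nonneg_left _ hP0
          rw [Finset.sum_comm]
          calc ∑ a ∈ A, ∑ t ∈ T, w a * (x a t / S a)
              = ∑ a ∈ A, w a * (S a / S a) := by
                apply Finset.sum_congr rfl
                intro a ha
                rw [← Finset.mul_sum, ← Finset.sum_div]
            _ ≤ ∑ a ∈ A, w a := by
                apply Finset.sum_le_sum
                intro a ha
                by_cases hSa : S a = 0
                · simp [hSa]; exact hw a ha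
                · rw [div_self hSa, mul_one]
            _ = 1 := hw1
      _ = ∏ a ∈ A, S a ^ w a := mul_one _

/-- Generalized Hölder with weights summing to at least one. -/
lemma holder_sum_ge_one {ι κ : Type*} (A : Finset ι) (T : Finset κ) (w : ι → ℝ) (x : ι → κ → ℝ)
    (hw : ∀ a ∈ A, 0 ≤ w a) (hW : 1 ≤ ∑ a ∈ A, w a)
    (hx : ∀ a ∈ A, ∀ t ∈ T, 0 ≤ x a t) :
    ∑ t ∈ T, ∏ a ∈ A, x a t ^ w a ≤ ∏ a ∈ A, (∑ t ∈ T, x a t) ^ w a := by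
  set W := ∑ a ∈ A, w a with hWdef
  have hW0 : 0 < W := lt_of_lt_of_le one_pos hW
  have hw' : ∀ a ∈ A, 0 ≤ w a / W := fun a ha => div_nonneg (hw a ha) (le_of_lt hW0)
  have hw1 : ∑ a ∈ A, w a / W = 1 := by
    rw [← Finset.sum_div, div_self (ne_of_gt hW0)]
  have h1 := holder_sum_one A T (fun a => w a / W) x hw' hw1 hx
  have hexp : ∀ (z : ι → ℝ), (∀ a ∈ A, 0 ≤ z a) →
      (∏ a ∈ A, z a ^ (w a / W)) ^ W = ∏ a ∈ A, z a ^ w a := by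
    intro z hz
    rw [← Real.finset_prod_rpow A _ (fun a ha => Real.rpow_nonneg (hz a ha) _) W]
    apply Finset.prod_congr rfl
    intro a ha
    rw [← Real.rpow_mul (hz a ha), div_mul_cancel₀ _ (ne_of_gt hW0)]
  calc ∑ t ∈ T, ∏ a ∈ A, x a t ^ w a
      = ∑ t ∈ T, (∏ a ∈ A, x a t ^ (w a / W)) ^ W := by
        apply Finset.sum_congr rfl
        intro t ht
        exact (hexp (fun a => x a t) (fun a ha => hx a ha t ht)).symm
    _ ≤ (∑ t ∈ T, ∏ a ∈ A, x a t ^ (w a / W)) ^ W := by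
        apply sum_rpow_le_rpow_sum'' T _ _ hW
        intro t ht
        exact Finset.prod_nonneg fun a ha => Real.rpow_nonneg (hx a ha t ht) _
    _ ≤ (∏ a ∈ A, (∑ t ∈ T, x a t) ^ (w a / W)) ^ W := by
        apply Real.rpow_le_rpow _ h1 (le_of_lt hW0)
        exact Finset.sum_nonneg fun t ht =>
          Finset.prod_nonneg fun a ha => Real.rpow_nonneg (hx a ha t ht) _
    _ = ∏ a ∈ A, (∑ t ∈ T, x a t) ^ w a :=
        hexp _ (fun a ha => Finset.sum_nonneg (hx a ha))
/-- The finset of maps agreeing with `y₀` outside `s`. -/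
def cylSet {V L : Type*} [Fintype V] [DecidableEq V] [Fintype L] [DecidableEq L]
    (s : Finset V) (y₀ : V → L) : Finset (V → L) :=
  Finset.univ.filter (fun y => ∀ i, i ∉ s → y i = y₀ i)

lemma cylSet_empty {V L : Type*} [Fintype V] [DecidableEq V] [Fintype L] [DecidableEq L]
    (y₀ : V → L) : cylSet (∅ : Finset V) y₀ = {y₀} := by
  ext y
  simp only [cylSet, Finset.mem_filter, Finset.mem_univ, true_and, Finset.mem_singleton,
    Finset.notMem_empty, not_false_iff, forall_true_left]
  exact funext_iff.symm

lemma cylSet_univ {V L : Type*} [Fintype V] [DecidableEq V] [Fintype L] [DecidableEq L]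
    (y₀ : V → L) : cylSet (Finset.univ : Finset V) y₀ = Finset.univ := by
  ext y
  simp [cylSet]

lemma sum_cylSet_insert {V L : Type*} [Fintype V] [DecidableEq V] [Fintype L] [DecidableEq L]
    (y₀ : V → L) {s : Finset V} {i : V} (hi : i ∉ s) (F : (V → L) → ℝ) :
    ∑ y ∈ cylSet (insert i s) y₀, F y
      = ∑ y ∈ cylSet s y₀, ∑ t : L, F (Function.update y i t) := by
  have : ∑ y ∈ cylSet s y₀, ∑ t : L, F (Function.update y i t)
      = ∑ p ∈ (cylSet s y₀) ×ˢ (Finset.univ : Finset L), F (Function.update p.1 i p.2) := by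
    rw [Finset.sum_product]
  rw [this]
  apply Finset.sum_nbij' (fun y => (Function.update y i (y₀ i), y i))
    (fun p => Function.update p.1 i p.2)
  · intro y hy
    simp only [cylSet, Finset.mem_filter, Finset.mem_univ, true_and] at hy
    simp only [Finset.mem_product, Finset.mem_univ, and_true]
    simp only [cylSet, Finset.mem_filter, Finset.mem_univ, true_and]
    intro j hj
    by_cases hji : j = i
    · subst hji; rw [Function.update_self]
    · rw [Function.update_of_ne hji]
      exact hy j (by simp [hji, hj])
  · intro p hp
    simp only [Finset.mem_product, Finset.mem_univ, and_true] at hp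
    simp only [cylSet, Finset.mem_filter, Finset.mem_univ, true_and] at hp ⊢
    intro j hj
    simp only [Finset.mem_insert, not_or] at hj
    rw [Function.update_of_ne hj.1]
    exact hp j hj.2
  · intro y hy
    simp only [cylSet, Finset.mem_filter, Finset.mem_univ, true_and] at hy
    simp only [Function.update_idem, Function.update_eq_self]
  · intro p hp
    simp only [Finset.mem_product, Finset.mem_univ, and_true] at hp
    simp only [cylSet, Finset.mem_filter, Finset.mem_univ, true_and] at hp
    have hpi : p.1 i = y₀ i := hp i hi
    ext
    · simp only [Function.update_idem, ← hpi, Function.update_eq_self]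
    · simp only [Function.update_self]
  · intro y hy
    simp only [Function.update_idem, Function.update_eq_self]
lemma key_induction {V L ι : Type*} [Fintype V] [DecidableEq V] [Fintype L] [DecidableEq L]
    (y₀ : V → L) (A : Finset ι) (R : ι → Finset V) (c : ι → ℝ) (hc : ∀ a ∈ A, 0 < c a)
    (s : Finset V) :
    ∀ (f : ι → (V → L) → ℝ),
      (∀ a ∈ A, ∀ y, 0 ≤ f a y) →
      (∀ a ∈ A, ∀ y y' : V → L, (∀ j ∈ R a ∩ s, y j = y' j) → f a y = f a y') →
      (∀ i ∈ s, 1 ≤ ∑ a ∈ A.filter (fun a => i ∈ R a), c a) →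
      ∑ y ∈ cylSet s y₀, ∏ a ∈ A, f a y ^ c a
        ≤ ∏ a ∈ A, (∑ y ∈ cylSet (R a ∩ s) y₀, f a y) ^ c a := by
  induction s using Finset.induction_on with
  | empty =>
    intro f hf hdep hcov
    simp only [Finset.inter_empty, cylSet_empty, Finset.sum_singleton]
    exact le_refl _
  | @insert i s' hi ih =>
    intro f hf hdep hcov
    set f' : ι → (V → L) → ℝ :=
      fun a y => if i ∈ R a then ∑ t : L, f a (Function.update y i t) else f a y with hf'def
    have hf' : ∀ a ∈ A, ∀ y, 0 ≤ f' a y := by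
      intro a ha y
      by_cases hiR : i ∈ R a
      · simp only [hf'def, if_pos hiR]
        exact Finset.sum_nonneg fun t _ => hf a ha _
      · simp only [hf'def, if_neg hiR]
        exact hf a ha y
    have hdep' : ∀ a ∈ A, ∀ y y' : V → L, (∀ j ∈ R a ∩ s', y j = y' j) → f' a y = f' a y' := by
      intro a ha y y' hagree
      by_cases hiR : i ∈ R a
      · simp only [hf'def, if_pos hiR]
        apply Finset.sum_congr rfl
        intro t _
        apply hdep a ha
        intro j hj
        by_cases hji : j = i
        · subst hji; simp only [Function.update_self]
        · rw [Function.update_of_ne hji, Function.update_of_ne hji]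
          apply hagree
          simp only [Finset.mem_inter, Finset.mem_insert] at hj ⊢
          exact ⟨hj.1, hj.2.resolve_left hji⟩
      · simp only [hf'def, if_neg hiR]
        apply hdep a ha
        intro j hj
        apply hagree
        simp only [Finset.mem_inter, Finset.mem_insert] at hj ⊢
        refine ⟨hj.1, ?_⟩
        rcases hj.2 with h | h
        · exact absurd (h ▸ hj.1) hiR
        · exact h
    have hcov' : ∀ j ∈ s', 1 ≤ ∑ a ∈ A.filter (fun a => j ∈ R a), c a :=
      fun j hj => hcov j (Finset.mem_insert_of_mem hj)
    have hstep : ∀ y ∈ cylSet s' y₀,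
        ∑ t : L, ∏ a ∈ A, f a (Function.update y i t) ^ c a
          ≤ ∏ a ∈ A, f' a y ^ c a := by
      intro y _
      have hsplit : ∀ t : L, ∏ a ∈ A, f a (Function.update y i t) ^ c a
          = (∏ a ∈ A.filter (fun a => i ∈ R a), f a (Function.update y i t) ^ c a)
            * ∏ a ∈ A.filter (fun a => ¬ i ∈ R a), f a y ^ c a := by
        intro t
        rw [← Finset.prod_filter_mul_prod_filter_not A (fun a => i ∈ R a)]
        congr 1
        apply Finset.prod_congr rfl
        intro a ha
        simp only [Finset.mem_filter] at ha
        congr 1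
        apply hdep a ha.1
        intro j hj
        have hji : j ≠ i := by
          intro h; exact ha.2 (h ▸ (Finset.mem_inter.1 hj).1)
        rw [Function.update_of_ne hji]
      have hC0 : 0 ≤ ∏ a ∈ A.filter (fun a => ¬ i ∈ R a), f a y ^ c a :=
        Finset.prod_nonneg fun a ha =>
          Real.rpow_nonneg (hf a (Finset.mem_filter.1 ha).1 y) _
      have hhold : ∑ t : L, ∏ a ∈ A.filter (fun a => i ∈ R a),
            f a (Function.update y i t) ^ c a
          ≤ ∏ a ∈ A.filter (fun a => i ∈ R a),
              (∑ t : L, f a (Function.update y i t)) ^ c a := by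
        apply holder_sum_ge_one
        · intro a ha
          exact le_of_lt (hc a (Finset.mem_filter.1 ha).1)
        · exact hcov i (Finset.mem_insert_self i s')
        · intro a ha t _
          exact hf a (Finset.mem_filter.1 ha).1 _
      calc ∑ t : L, ∏ a ∈ A, f a (Function.update y i t) ^ c a
          = (∑ t : L, ∏ a ∈ A.filter (fun a => i ∈ R a),
              f a (Function.update y i t) ^ c a)
            * ∏ a ∈ A.filter (fun a => ¬ i ∈ R a), f a y ^ c a := by
            rw [Finset.sum_mul]
            exact Finset.sum_congr rfl fun t _ => hsplit t
        _ ≤ (∏ a ∈ A.filter (fun a => i ∈ R a),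
              (∑ t : L, f a (Function.update y i t)) ^ c a)
            * ∏ a ∈ A.filter (fun a => ¬ i ∈ R a), f a y ^ c a :=
            mul_le_mul_of_nonneg_right hhold hC0
        _ = ∏ a ∈ A, f' a y ^ c a := by
            rw [← Finset.prod_filter_mul_prod_filter_not A (fun a => i ∈ R a)
              (fun a => f' a y ^ c a)]
            congr 1
            · apply Finset.prod_congr rfl
              intro a ha
              simp only [hf'def, if_pos (Finset.mem_filter.1 ha).2]
            · apply Finset.prod_congr rfl
              intro a ha
              simp only [hf'def, if_neg (Finset.mem_filter.1 ha).2]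
    calc ∑ y ∈ cylSet (insert i s') y₀, ∏ a ∈ A, f a y ^ c a
        = ∑ y ∈ cylSet s' y₀, ∑ t : L, ∏ a ∈ A, f a (Function.update y i t) ^ c a :=
          sum_cylSet_insert y₀ hi _
      _ ≤ ∑ y ∈ cylSet s' y₀, ∏ a ∈ A, f' a y ^ c a := Finset.sum_le_sum hstep
      _ ≤ ∏ a ∈ A, (∑ y ∈ cylSet (R a ∩ s') y₀, f' a y) ^ c a := ih f' hf' hdep' hcov'
      _ = ∏ a ∈ A, (∑ y ∈ cylSet (R a ∩ insert i s') y₀, f a y) ^ c a := by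
          apply Finset.prod_congr rfl
          intro a ha
          congr 1
          by_cases hiR : i ∈ R a
          · have hset : R a ∩ insert i s' = insert i (R a ∩ s') := by
              ext j
              simp only [Finset.mem_inter, Finset.mem_insert]
              constructor
              · rintro ⟨h1, h2 | h2⟩
                · exact Or.inl h2
                · exact Or.inr ⟨h1, h2⟩
              · rintro (h | ⟨h1, h2⟩)
                · exact ⟨h ▸ hiR, Or.inl h⟩
                · exact ⟨h1, Or.inr h2⟩
            rw [hset, sum_cylSet_insert y₀ (fun h => hi (Finset.mem_inter.1 h).2)]
            apply Finset.sum_congr rfl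
            intro y _
            simp only [hf'def, if_pos hiR]
          · have hset : R a ∩ insert i s' = R a ∩ s' := by
              ext j
              simp only [Finset.mem_inter, Finset.mem_insert]
              constructor
              · rintro ⟨h1, h2 | h2⟩
                · exact absurd (h2 ▸ h1) hiR
                · exact ⟨h1, h2⟩
              · rintro ⟨h1, h2⟩
                exact ⟨h1, Or.inr h2⟩
            rw [hset]
            apply Finset.sum_congr rfl
            intro y _
            simp only [hf'def, if_neg hiR]
/-- For a region family `𝓡` with potentials `θ_r` and positive
coefficients `c_r` that fractionally cover `V` (i.e. `∑_{r∈𝓡, i∈r} c_r ≥ 1` for all `i`),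
`∑_{y : V → L} ∏_{r∈𝓡} exp(θ_r(y|_r)) ≤ ∏_{r∈𝓡} (∑_{z∈Y_r} exp(θ_r(z)/c_r))^{c_r}`. -/
theorem fractional_cover_decomposition_bound {V L : Type*} [Fintype V] [Nonempty V]
    [DecidableEq V] [Fintype L] [Nonempty L]
    (𝓡 : Finset (Finset V))
    (θ : (r : Finset V) → (↥r → L) → ℝ)
    (c : Finset V → ℝ) (hc : ∀ r ∈ 𝓡, 0 < c r)
    (hcover : ∀ i : V, 1 ≤ ∑ r ∈ 𝓡.filter (fun r => i ∈ r), c r) :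
    ∑ y : V → L, ∏ r ∈ 𝓡, Real.exp (θ r (fun i => y i)) ≤
      ∏ r ∈ 𝓡, (∑ z : ↥r → L, Real.exp (θ r z / c r)) ^ (c r) := by
  classical
  set y₀ : V → L := fun _ => Classical.arbitrary L with hy₀
  set f : (r : Finset V) → (V → L) → ℝ :=
    fun r y => Real.exp (θ r (fun i => y ↑i) / c r) with hfdef
  have hf : ∀ r ∈ 𝓡, ∀ y, 0 ≤ f r y := fun r _ y => le_of_lt (Real.exp_pos _)
  have hdep : ∀ r ∈ 𝓡, ∀ y y' : V → L,
      (∀ j ∈ (id r : Finset V) ∩ Finset.univ, y j = y' j) → f r y = f r y' := by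
    intro r _ y y' hagree
    simp only [hfdef]
    rw [congrArg (θ r) (funext fun i => hagree ↑i (by simp [i.2]) : (fun i : ↥r => y ↑i) = fun i : ↥r => y' ↑i)]
  have hcov : ∀ i ∈ (Finset.univ : Finset V),
      1 ≤ ∑ r ∈ 𝓡.filter (fun r => i ∈ (id r : Finset V)), c r := fun i _ => hcover i
  have hkey := key_induction y₀ 𝓡 id c hc Finset.univ f hf hdep hcov
  have hL : ∑ y : V → L, ∏ r ∈ 𝓡, Real.exp (θ r (fun i => y i))
      = ∑ y ∈ cylSet (Finset.univ : Finset V) y₀, ∏ r ∈ 𝓡, f r y ^ c r := by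
    rw [cylSet_univ]
    apply Finset.sum_congr rfl
    intro y _
    apply Finset.prod_congr rfl
    intro r hr
    simp only [hfdef]
    rw [← Real.exp_mul, div_mul_cancel₀ _ (ne_of_gt (hc r hr))]
  have hR : ∀ r ∈ 𝓡, ∑ y ∈ cylSet ((id r : Finset V) ∩ Finset.univ) y₀, f r y
      = ∑ z : ↥r → L, Real.exp (θ r z / c r) := by
    intro r _
    rw [Finset.inter_univ, id_eq]
    apply Finset.sum_nbij' (fun y => (fun i : ↥r => y ↑i))
      (fun z => (fun j => if h : j ∈ r then z ⟨j, h⟩ else y₀ j))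
    · intro y _; exact Finset.mem_univ _
    · intro z _
      simp only [cylSet, Finset.mem_filter, Finset.mem_univ, true_and]
      intro j hj
      rw [dif_neg hj]
    · intro y hy
      simp only [cylSet, Finset.mem_filter, Finset.mem_univ, true_and] at hy
      funext j
      by_cases h : j ∈ r
      · rw [dif_pos h]
      · rw [dif_neg h]
        exact (hy j h).symm
    · intro z _
      funext i
      simp only [dif_pos i.2]
    · intro y _
      rfl
  calc ∑ y : V → L, ∏ r ∈ 𝓡, Real.exp (θ r (fun i => y i))
      = ∑ y ∈ cylSet (Finset.univ : Finset V) y₀, ∏ r ∈ 𝓡, f r y ^ c r := hL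
    _ ≤ ∏ r ∈ 𝓡, (∑ y ∈ cylSet ((id r : Finset V) ∩ Finset.univ) y₀, f r y) ^ c r := hkey
    _ = ∏ r ∈ 𝓡, (∑ z : ↥r → L, Real.exp (θ r z / c r)) ^ (c r) := by
        apply Finset.prod_congr rfl
        intro r hr
        rw [hR r hr]
end

section
/- Let V be a finite nonempty index set, L a finite nonempty label type, 𝓡 a region family with potentials θ_r : Y_r → ℝ, ε > 0, and coefficients c_r > 0 (r ∈ 𝓡) that fractionally cover V. Let a_r : Y_r → ℝ be adjustment functions with ∑_{r∈𝓡} a_r(y|_r) = 0 for every joint label y. Then ε·log( ∑_{y : V → L} exp( (∑_{r∈𝓡} θ_r(y|_r)) / ε ) ) ≤ ∑_{r∈𝓡} ε·c_r·log( ∑_{z ∈ Y_r} exp( (θ_r(z) + a_r(z)) / (ε·c_r) ) ). -/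
/-!
Put `F_r = exp ((θ_r + a_r) / (ε c_r))`. Since the adjustments sum to zero on every joint label,
`exp ((∑_r θ_r(y|_r)) / ε) = ∏_r F_r(y|_r) ^ c_r`, so after taking logarithms the claim is Finner's
inequality for counting measure: `∑_y ∏_r F_r(y|_r) ^ c_r ≤ ∏_r (∑_{z ∈ Y_r} F_r z) ^ c_r` whenever
the `c_r` fractionally cover `V`. It is proved by summing out one coordinate `i` at a time: on the
regions containing `i`, whose exponents add up to at least `1`, this is Hölder's inequality with
total exponent `≥ 1`, which follows from weighted AM-GM.
-/

open Finset Function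

section Holder

variable {ι X : Type*}

theorem prod_rpow_le_sum_mul_of_le_one (t : Finset ι) {b c : ι → ℝ} (hb₀ : ∀ r ∈ t, 0 ≤ b r)
    (hb₁ : ∀ r ∈ t, b r ≤ 1) (hc : ∀ r ∈ t, 0 ≤ c r) (hs : 1 ≤ ∑ r ∈ t, c r) :
    ∏ r ∈ t, b r ^ c r ≤ ∑ r ∈ t, c r / (∑ r ∈ t, c r) * b r := by
  set σ := ∑ r ∈ t, c r
  have hσ : 0 < σ := one_pos.trans_le hs
  calc ∏ r ∈ t, b r ^ c r ≤ ∏ r ∈ t, b r ^ (c r / σ) := by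
        refine prod_le_prod (fun r hr => Real.rpow_nonneg (hb₀ r hr) _) fun r hr => ?_
        exact Real.rpow_le_rpow_of_exponent_ge' (hb₀ r hr) (hb₁ r hr)
          (div_nonneg (hc r hr) hσ.le) (div_le_self (hc r hr) hs)
    _ ≤ ∑ r ∈ t, c r / σ * b r :=
        Real.geom_mean_le_arith_mean_weighted t _ _ (fun r hr => div_nonneg (hc r hr) hσ.le)
          (by rw [← sum_div, div_self hσ.ne']) hb₀

variable [Fintype X]

theorem sum_prod_rpow_le_prod_sum_rpow (t : Finset ι) {g : ι → X → ℝ} {c : ι → ℝ}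
    (hg : ∀ r ∈ t, ∀ x, 0 ≤ g r x) (hc : ∀ r ∈ t, 0 ≤ c r) (hs : 1 ≤ ∑ r ∈ t, c r) :
    ∑ x, ∏ r ∈ t, g r x ^ c r ≤ ∏ r ∈ t, (∑ x, g r x) ^ c r := by
  set S : ι → ℝ := fun r => ∑ x, g r x
  set σ := ∑ r ∈ t, c r
  have hS : ∀ r ∈ t, 0 ≤ S r := fun r hr => sum_nonneg fun x _ => hg r hr x
  have hgS : ∀ r ∈ t, ∀ x, g r x ≤ S r := fun r hr x =>
    single_le_sum (fun x _ => hg r hr x) (mem_univ x)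
  have hnormalized : ∀ r ∈ t, ∀ x, 0 ≤ g r x / S r ∧ g r x / S r ≤ 1 := fun r hr x =>
    ⟨div_nonneg (hg r hr x) (hS r hr), div_le_one_of_le₀ (hgS r hr x) (hS r hr)⟩
  have hsplit : ∀ r ∈ t, ∀ x, g r x ^ c r = S r ^ c r * (g r x / S r) ^ c r := by
    intro r hr x
    rw [← Real.mul_rpow (hS r hr) (hnormalized r hr x).1]
    rcases (hS r hr).eq_or_lt with h | h
    · rw [le_antisymm (h ▸ hgS r hr x) (hg r hr x), ← h, zero_mul]
    · rw [mul_div_cancel₀ _ h.ne']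
  have hP : 0 ≤ ∏ r ∈ t, S r ^ c r := prod_nonneg fun r hr => Real.rpow_nonneg (hS r hr) _
  calc ∑ x, ∏ r ∈ t, g r x ^ c r
      = (∏ r ∈ t, S r ^ c r) * ∑ x, ∏ r ∈ t, (g r x / S r) ^ c r := by
        rw [mul_sum]
        exact sum_congr rfl fun x _ => by
          rw [← prod_mul_distrib]; exact prod_congr rfl fun r hr => hsplit r hr x
    _ ≤ (∏ r ∈ t, S r ^ c r) * ∑ x, ∑ r ∈ t, c r / σ * (g r x / S r) := by
        gcongr with x
        exact prod_rpow_le_sum_mul_of_le_one t (fun r hr => (hnormalized r hr x).1)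
          (fun r hr => (hnormalized r hr x).2) hc hs
    _ = (∏ r ∈ t, S r ^ c r) * ∑ r ∈ t, c r / σ * ∑ x, g r x / S r := by
        simp_rw [sum_comm (s := univ), mul_sum]
    _ ≤ (∏ r ∈ t, S r ^ c r) * ∑ r ∈ t, c r / σ := by
        gcongr with r hr
        refine mul_le_of_le_one_right (div_nonneg (hc r hr) (one_pos.trans_le hs).le) ?_
        rw [← sum_div]
        exact div_self_le_one _
    _ = ∏ r ∈ t, S r ^ c r := by rw [← sum_div, div_self (one_pos.trans_le hs).ne', mul_one]

end Holder

section Coordinates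

variable {V L ι : Type*} [DecidableEq V] {t : Finset ι} {c : ι → ℝ}

theorem DependsOn.apply_update_of_notMem {F : (V → L) → ℝ} {d : Finset V} (hF : DependsOn F d)
    {i : V} (hi : i ∉ d) (y : V → L) (ℓ : L) : F (Function.update y i ℓ) = F y :=
  hF fun _ hj => update_of_ne (ne_of_mem_of_not_mem hj hi) ℓ y

variable [Fintype L]

def sumOutCoord (i : V) (F : (V → L) → ℝ) (y : V → L) : ℝ :=
  ∑ ℓ, F (update y i ℓ)

theorem DependsOn.sumOutCoord {F : (V → L) → ℝ} {d : Finset V} (hF : DependsOn F d) (i : V) :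
    DependsOn (sumOutCoord i F) ↑(d.erase i) := fun _ _ h =>
  sum_congr rfl fun ℓ _ => hF.update i ℓ h

theorem sumOutCoord_prod_rpow_le {d : ι → Finset V} {f : ι → (V → L) → ℝ}
    (hf : ∀ r ∈ t, ∀ y, 0 ≤ f r y) (hdep : ∀ r ∈ t, DependsOn (f r) ↑(d r))
    (hc : ∀ r ∈ t, 0 ≤ c r) {i : V} (hi : 1 ≤ ∑ r ∈ t with i ∈ d r, c r) (y : V → L) :
    sumOutCoord i (fun y => ∏ r ∈ t, f r y ^ c r) y ≤
      ∏ r ∈ t, (if i ∈ d r then sumOutCoord i (f r) y else f r y) ^ c r := by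
  have hfixed : ∀ ℓ, ∏ r ∈ t with i ∉ d r, f r (update y i ℓ) ^ c r =
      ∏ r ∈ t with i ∉ d r, f r y ^ c r := fun ℓ => prod_congr rfl fun r hr => by
    rw [(hdep r (mem_filter.1 hr).1).apply_update_of_notMem (mem_filter.1 hr).2]
  have hin : ∏ r ∈ t with i ∈ d r, (if i ∈ d r then sumOutCoord i (f r) y else f r y) ^ c r =
      ∏ r ∈ t with i ∈ d r, (∑ ℓ, f r (update y i ℓ)) ^ c r :=
    prod_congr rfl fun r hr => by rw [if_pos (mem_filter.1 hr).2, sumOutCoord]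
  have hout : ∏ r ∈ t with i ∉ d r, (if i ∈ d r then sumOutCoord i (f r) y else f r y) ^ c r =
      ∏ r ∈ t with i ∉ d r, f r y ^ c r :=
    prod_congr rfl fun r hr => by rw [if_neg (mem_filter.1 hr).2]
  rw [← prod_filter_mul_prod_filter_not t (fun r => i ∈ d r), hin, hout, sumOutCoord]
  simp only [← prod_filter_mul_prod_filter_not t (fun r => i ∈ d r), hfixed, ← sum_mul]
  refine mul_le_mul_of_nonneg_right ?_
    (prod_nonneg fun r hr => Real.rpow_nonneg (hf r (mem_filter.1 hr).1 y) _)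
  exact sum_prod_rpow_le_prod_sum_rpow _ (fun r hr ℓ => hf r (mem_filter.1 hr).1 _)
    (fun r hr => hc r (mem_filter.1 hr).1) hi

variable [Fintype V]

/-- For `F` depending only on the coordinates in `s`, this is the sum of `F` over `s → L`
(see `marginalSum_comp_restrict`). -/
noncomputable def marginalSum (s : Finset V) (F : (V → L) → ℝ) : ℝ :=
  (∑ y, F y) / (Fintype.card L : ℝ) ^ #sᶜ

theorem sum_sumOutCoord (i : V) (F : (V → L) → ℝ) :
    ∑ y, sumOutCoord i F y = Fintype.card L * ∑ y, F y := by
  have hinv : Involutive fun p : (V → L) × L => (update p.1 i p.2, p.1 i) := fun p => by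
    simp
  calc ∑ y, sumOutCoord i F y = ∑ p : (V → L) × L, F (update p.1 i p.2) :=
        (Fintype.sum_prod_type' _).symm
    _ = ∑ p : (V → L) × L, F p.1 := Fintype.sum_equiv hinv.toPerm _ _ fun _ => rfl
    _ = Fintype.card L * ∑ y, F y := by
        rw [Fintype.sum_prod_type, mul_sum]
        simp [mul_comm]

theorem sum_comp_restrict (r : Finset V) (G : (r → L) → ℝ) :
    ∑ y : V → L, G (fun i => y i) = (Fintype.card L : ℝ) ^ #rᶜ * ∑ z, G z := by
  rw [Fintype.sum_equiv (Equiv.piEquivPiSubtypeProd (· ∈ r) fun _ => L)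
    (fun y => G fun i => y i) (fun p => G p.1) fun _ => rfl, Fintype.sum_prod_type, mul_sum]
  simp [mul_comm, card_compl]

theorem marginalSum_univ (F : (V → L) → ℝ) : marginalSum univ F = ∑ y, F y := by
  simp [marginalSum]

theorem marginalSum_mono {s : Finset V} {F G : (V → L) → ℝ} (h : ∀ y, F y ≤ G y) :
    marginalSum s F ≤ marginalSum s G :=
  div_le_div_of_nonneg_right (sum_le_sum fun y _ => h y) (by positivity)

variable [Nonempty L]

theorem marginalSum_comp_restrict (r : Finset V) (G : (r → L) → ℝ) :
    marginalSum r (fun y => G (fun i => y i)) = ∑ z, G z := by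
  rw [marginalSum, sum_comp_restrict, mul_div_cancel_left₀ _ (pow_ne_zero _ (by positivity))]

theorem marginalSum_insert {s : Finset V} {i : V} (hi : i ∉ s) (F : (V → L) → ℝ) :
    marginalSum (insert i s) F = marginalSum s (sumOutCoord i F) := by
  have hcard : #(insert i s)ᶜ + 1 = #sᶜ := by
    rw [compl_insert, card_erase_add_one (mem_compl.2 hi)]
  have hL : (Fintype.card L : ℝ) ≠ 0 := by positivity
  rw [marginalSum, marginalSum, sum_sumOutCoord, ← hcard, pow_succ]
  field_simp

theorem DependsOn.marginalSum_empty {F : (V → L) → ℝ} (hF : DependsOn F ∅)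
    (y : V → L) : marginalSum ∅ F = F y := by
  rw [marginalSum, sum_congr rfl fun y' _ => hF.empty y' y]
  simp

theorem marginalSum_prod_rpow_le (s : Finset V) {d : ι → Finset V} {f : ι → (V → L) → ℝ}
    (hf : ∀ r ∈ t, ∀ y, 0 ≤ f r y) (hdep : ∀ r ∈ t, DependsOn (f r) ↑(d r))
    (hds : ∀ r ∈ t, d r ⊆ s) (hc : ∀ r ∈ t, 0 ≤ c r)
    (hcover : ∀ i ∈ s, 1 ≤ ∑ r ∈ t with i ∈ d r, c r) :
    marginalSum s (fun y => ∏ r ∈ t, f r y ^ c r) ≤ ∏ r ∈ t, marginalSum (d r) (f r) ^ c r := by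
  induction s using Finset.induction generalizing d f with
  | empty =>
    have hconst : ∀ r ∈ t, DependsOn (f r) ∅ := fun r hr _ _ _ =>
      hdep r hr fun j hj => absurd (hds r hr hj) (notMem_empty j)
    obtain ⟨y⟩ := (inferInstance : Nonempty (V → L))
    refine le_of_eq ?_
    rw [DependsOn.marginalSum_empty (fun x₁ x₂ _ => prod_congr rfl fun r hr => by
      rw [(hconst r hr).empty x₁ x₂]) y]
    refine prod_congr rfl fun r hr => ?_
    rw [subset_empty.1 (hds r hr), (hconst r hr).marginalSum_empty y]
  | insert i s hi ih =>
    set g : ι → (V → L) → ℝ := fun r => if i ∈ d r then sumOutCoord i (f r) else f r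
    have hg : ∀ r ∈ t, ∀ y, 0 ≤ g r y := fun r hr y => by
      unfold g; split_ifs
      exacts [sum_nonneg fun ℓ _ => hf r hr _, hf r hr y]
    have hgdep : ∀ r ∈ t, DependsOn (g r) ↑((d r).erase i) := fun r hr => by
      unfold g; split_ifs with h
      · exact (hdep r hr).sumOutCoord i
      · rw [erase_eq_of_notMem h]; exact hdep r hr
    have hgs : ∀ r ∈ t, (d r).erase i ⊆ s := fun r hr j hj => by
      obtain ⟨hji, hj⟩ := mem_erase.1 hj
      exact (mem_insert.1 (hds r hr hj)).resolve_left hji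
    have hgcover : ∀ j ∈ s, 1 ≤ ∑ r ∈ t with j ∈ (d r).erase i, c r := fun j hj => by
      have hji : j ≠ i := ne_of_mem_of_not_mem hj hi
      simpa [mem_erase, hji] using hcover j (mem_insert_of_mem hj)
    have hmarg : ∀ r ∈ t, marginalSum ((d r).erase i) (g r) = marginalSum (d r) (f r) :=
      fun r hr => by
        unfold g; split_ifs with h
        · rw [← marginalSum_insert (notMem_erase i (d r)), insert_erase h]
        · rw [erase_eq_of_notMem h]
    calc marginalSum (insert i s) (fun y => ∏ r ∈ t, f r y ^ c r)
        = marginalSum s (sumOutCoord i fun y => ∏ r ∈ t, f r y ^ c r) := marginalSum_insert hi _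
      _ ≤ marginalSum s (fun y => ∏ r ∈ t, g r y ^ c r) := marginalSum_mono fun y => by
          simpa only [g, apply_ite (fun F : (V → L) → ℝ => F y)] using
            sumOutCoord_prod_rpow_le hf hdep hc (hcover i (mem_insert_self i s)) y
      _ ≤ ∏ r ∈ t, marginalSum ((d r).erase i) (g r) ^ c r := ih hg hgdep hgs hgcover
      _ = ∏ r ∈ t, marginalSum (d r) (f r) ^ c r := prod_congr rfl fun r hr => by rw [hmarg r hr]

theorem sum_prod_rpow_le_of_fractionalCover (d : ι → Finset V)
    (g : (r : ι) → (d r → L) → ℝ) (hg : ∀ r ∈ t, ∀ z, 0 ≤ g r z) (hc : ∀ r ∈ t, 0 ≤ c r)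
    (hcover : ∀ i, 1 ≤ ∑ r ∈ t with i ∈ d r, c r) :
    ∑ y : V → L, ∏ r ∈ t, g r (fun i => y i) ^ c r ≤ ∏ r ∈ t, (∑ z, g r z) ^ c r := by
  have h := marginalSum_prod_rpow_le univ (f := fun r y => g r fun i : d r => y i)
    (fun r hr y => hg r hr _) (fun r _ _ _ h => congrArg (g r) (funext fun i => h i i.2))
    (fun r _ => subset_univ _) hc fun i _ => hcover i
  simpa only [marginalSum_univ, marginalSum_comp_restrict] using h

end Coordinates

theorem fractional_softmax_decomposition_bound_general {V L : Type*} [Fintype V]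
    [DecidableEq V] [Fintype L] [Nonempty L]
    (𝓡 : Finset (Finset V))
    (θ : (r : Finset V) → (↥r → L) → ℝ)
    (ε : ℝ) (hε : 0 < ε)
    (c : Finset V → ℝ) (hc : ∀ r ∈ 𝓡, 0 < c r)
    (hcover : ∀ i : V, 1 ≤ ∑ r ∈ 𝓡.filter (fun r => i ∈ r), c r)
    (a : (r : Finset V) → (↥r → L) → ℝ)
    (ha : ∀ y : V → L, ∑ r ∈ 𝓡, a r (fun i => y i) = 0) :
    ε * Real.log (∑ y : V → L, Real.exp ((∑ r ∈ 𝓡, θ r (fun i => y i)) / ε)) ≤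
      ∑ r ∈ 𝓡, ε * c r * Real.log (∑ z : ↥r → L, Real.exp ((θ r z + a r z) / (ε * c r))) := by
  set F : (r : Finset V) → (↥r → L) → ℝ := fun r z => Real.exp ((θ r z + a r z) / (ε * c r))
  have hF : ∀ y : V → L, Real.exp ((∑ r ∈ 𝓡, θ r (fun i => y i)) / ε) =
      ∏ r ∈ 𝓡, F r (fun i => y i) ^ c r := fun y => by
    have hθa : ∑ r ∈ 𝓡, θ r (fun i => y i) =
        ∑ r ∈ 𝓡, (θ r (fun i => y i) + a r (fun i => y i)) := by
      rw [sum_add_distrib, ha y, add_zero]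
    rw [hθa, sum_div, Real.exp_sum]
    refine prod_congr rfl fun r hr => ?_
    rw [← Real.exp_mul]
    field_simp [(hc r hr).ne']
  have hS : ∀ r, 0 < ∑ z, F r z := fun r => sum_pos (fun z _ => Real.exp_pos _) univ_nonempty
  have hfinner : ∑ y : V → L, Real.exp ((∑ r ∈ 𝓡, θ r (fun i => y i)) / ε) ≤
      ∏ r ∈ 𝓡, (∑ z, F r z) ^ c r := by
    simp_rw [hF]
    exact sum_prod_rpow_le_of_fractionalCover (fun r => r) F
      (fun _ _ _ => (Real.exp_pos _).le) (fun r hr => (hc r hr).le) hcover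
  calc ε * Real.log (∑ y : V → L, Real.exp ((∑ r ∈ 𝓡, θ r (fun i => y i)) / ε))
      ≤ ε * Real.log (∏ r ∈ 𝓡, (∑ z, F r z) ^ c r) := by gcongr
    _ = ∑ r ∈ 𝓡, ε * c r * Real.log (∑ z, F r z) := by
        rw [Real.log_prod fun r _ => (Real.rpow_pos_of_pos (hS r) _).ne', mul_sum]
        exact sum_congr rfl fun r _ => by rw [Real.log_rpow (hS r), mul_assoc]

/-- For a region family `𝓡` with potentials `θ_r`, `ε > 0`, positive
coefficients `c_r` that fractionally cover `V`, and adjustments `a_r` telescoping to zero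
on every joint label,
`ε·log(∑_y exp((∑_r θ_r(y|_r))/ε)) ≤ ∑_r ε·c_r·log(∑_{z∈Y_r} exp((θ_r(z)+a_r(z))/(ε·c_r)))`. -/
theorem fractional_softmax_decomposition_bound {V L : Type*} [Fintype V] [Nonempty V]
    [DecidableEq V] [Fintype L] [Nonempty L]
    (𝓡 : Finset (Finset V))
    (θ : (r : Finset V) → (↥r → L) → ℝ)
    (ε : ℝ) (hε : 0 < ε)
    (c : Finset V → ℝ) (hc : ∀ r ∈ 𝓡, 0 < c r)
    (hcover : ∀ i : V, 1 ≤ ∑ r ∈ 𝓡.filter (fun r => i ∈ r), c r)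
    (a : (r : Finset V) → (↥r → L) → ℝ)
    (ha : ∀ y : V → L, ∑ r ∈ 𝓡, a r (fun i => y i) = 0) :
    ε * Real.log (∑ y : V → L, Real.exp ((∑ r ∈ 𝓡, θ r (fun i => y i)) / ε)) ≤
      ∑ r ∈ 𝓡, ε * c r * Real.log (∑ z : ↥r → L, Real.exp ((θ r z + a r z) / (ε * c r))) :=
  fractional_softmax_decomposition_bound_general 𝓡 θ ε hε c hc hcover a ha
end

section
/- Fix a finite nonempty index set V, finite nonempty label type L, a region family 𝓡 with potentials θ_r : Y_r → ℝ, a region graph E on 𝓡, ε > 0, and a message vector λ. Fix a region r ∈ 𝓡 and suppose that for every parent p ∈ P(r) and every z ∈ Y_r the messages out of r satisfy the closed-form update: setting μ_{p→r}(z) = ε·log( ∑_{z_p ∈ Y_p, z_p|_r = z} exp( (θ_p(z_p) + ∑_{c ∈ C(p), c ≠ r} λ_{c→p}(z_p|_c) − ∑_{p' ∈ P(p)} λ_{p→p'}(z_p)) / ε ) ), one has λ_{r→p}(z) = (1/(1+|P(r)|))·( θ_r(z) + ∑_{c ∈ C(r)} λ_{c→r}(z|_c) + ∑_{p' ∈ P(r)}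 μ_{p'→r}(z) ) − μ_{p→r}(z). Then the beliefs are locally consistent at r: for every p ∈ P(r) and z ∈ Y_r, ∑_{z_p ∈ Y_p, z_p|_r = z} b_p^λ(z_p) = b_r^λ(z). -/
namespace Stmt9

variable {V L : Type*}

/-- Restriction of a partial label `z : ↥r → L` to a subregion `c ⊆ r`
(arbitrary when `c ⊄ r`). -/
noncomputable def res [DecidableEq V] [Nonempty L] (c r : Finset V) (z : ↥r → L) : ↥c → L :=
  if h : c ⊆ r then fun i => z ⟨i.1, h i.2⟩ else fun _ => Classical.arbitrary L

/-- Parents of a region `r` in the region graph `E`. -/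
def parents [DecidableEq V] (E : Finset (Finset V × Finset V)) (r : Finset V) :
    Finset (Finset V) :=
  (E.filter (fun e => e.1 = r)).image Prod.snd

/-- Children of a region `r` in the region graph `E`. -/
def children [DecidableEq V] (E : Finset (Finset V × Finset V)) (r : Finset V) :
    Finset (Finset V) :=
  (E.filter (fun e => e.2 = r)).image Prod.fst

variable [DecidableEq V] [Fintype L] [Nonempty L]

/-- Reparametrized potential `θ_r^λ`. -/
noncomputable def repot (θ : (r : Finset V) → (↥r → L) → ℝ)
    (E : Finset (Finset V × Finset V)) (lam : (r p : Finset V) → (↥r → L) → ℝ)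
    (r : Finset V) (z : ↥r → L) : ℝ :=
  θ r z + (∑ c ∈ children E r, lam c r (res c r z)) - ∑ p ∈ parents E r, lam r p z

/-- Belief `b_r^λ` at temperature `ε`. -/
noncomputable def belief (ε : ℝ) (θ : (r : Finset V) → (↥r → L) → ℝ)
    (E : Finset (Finset V × Finset V)) (lam : (r p : Finset V) → (↥r → L) → ℝ)
    (r : Finset V) (z : ↥r → L) : ℝ :=
  Real.exp (repot θ E lam r z / ε) / ∑ z' : ↥r → L, Real.exp (repot θ E lam r z' / ε)

variable [DecidableEq L]

/-- The message `μ_{p→r}` induced by the messages `λ`. -/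
noncomputable def mu (ε : ℝ) (θ : (r : Finset V) → (↥r → L) → ℝ)
    (E : Finset (Finset V × Finset V)) (lam : (r p : Finset V) → (↥r → L) → ℝ)
    (p r : Finset V) (z : ↥r → L) : ℝ :=
  ε * Real.log (∑ zp ∈ Finset.univ.filter (fun zp : ↥p → L => res r p zp = z),
    Real.exp ((θ p zp + (∑ c ∈ (children E p).erase r, lam c p (res c p zp))
      - ∑ p' ∈ parents E p, lam p p' zp) / ε))

/-- If the messages out of a region `r` satisfy the closed-form
block-coordinate update, then the beliefs are locally consistent at `r`: the marginal of
every parent belief agrees with the belief at `r`. -/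
theorem update_gives_local_consistency [Fintype V] [Nonempty V]
    (𝓡 : Finset (Finset V)) (θ : (r : Finset V) → (↥r → L) → ℝ)
    (E : Finset (Finset V × Finset V))
    (hE : ∀ e ∈ E, e.1 ∈ 𝓡 ∧ e.2 ∈ 𝓡 ∧ e.1 ⊂ e.2)
    (ε : ℝ) (hε : 0 < ε)
    (lam : (r p : Finset V) → (↥r → L) → ℝ)
    (r : Finset V) (hr : r ∈ 𝓡)
    (hfix : ∀ p ∈ parents E r, ∀ z : ↥r → L,
      lam r p z = (1 / (1 + ((parents E r).card : ℝ))) *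
          (θ r z + (∑ c ∈ children E r, lam c r (res c r z)) +
            ∑ p' ∈ parents E r, mu ε θ E lam p' r z)
        - mu ε θ E lam p r z) :
    ∀ p ∈ parents E r, ∀ z : ↥r → L,
      ∑ zp ∈ Finset.univ.filter (fun zp : ↥p → L => res r p zp = z),
          belief ε θ E lam p zp = belief ε θ E lam r z := by
  intro p hp z0
  -- basic structural facts
  obtain ⟨e, he, hesnd⟩ := Finset.mem_image.mp hp
  rw [Finset.mem_filter] at he
  obtain ⟨heE, hefst⟩ := he
  have hrpE : (r, p) ∈ E := by
    have : e = (r, p) := Prod.ext hefst hesnd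
    rwa [this] at heE
  have hsub : r ⊆ p := (hE _ hrpE).2.2.subset
  have hrc : r ∈ children E p :=
    Finset.mem_image.mpr ⟨(r, p), Finset.mem_filter.mpr ⟨hrpE, rfl⟩, rfl⟩
  set A : (↥p → L) → ℝ := fun zp =>
    (θ p zp + (∑ c ∈ (children E p).erase r, lam c p (res c p zp))
      - ∑ p' ∈ parents E p, lam p p' zp) with hA
  -- every z : ↥r → L extends to some zp : ↥p → L
  have hext : ∀ z : ↥r → L, ∃ zp : ↥p → L, res r p zp = z := by
    intro z
    refine ⟨fun i => if h : i.1 ∈ r then z ⟨i.1, h⟩ else Classical.arbitrary L, ?_⟩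
    unfold res
    rw [dif_pos hsub]
    funext i
    simp
  have hSpos : ∀ z : ↥r → L,
      0 < ∑ zp ∈ Finset.univ.filter (fun zp : ↥p → L => res r p zp = z),
        Real.exp (A zp / ε) := by
    intro z
    obtain ⟨zp, hzp⟩ := hext z
    exact Finset.sum_pos (fun _ _ => Real.exp_pos _)
      ⟨zp, Finset.mem_filter.mpr ⟨Finset.mem_univ _, hzp⟩⟩
  have hmu : ∀ z : ↥r → L,
      Real.exp (mu ε θ E lam p r z / ε)
        = ∑ zp ∈ Finset.univ.filter (fun zp : ↥p → L => res r p zp = z),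
            Real.exp (A zp / ε) := by
    intro z
    rw [mu, mul_comm, mul_div_assoc, div_self hε.ne', mul_one, Real.exp_log (hSpos z)]
  -- fiber sum of the parent's reparametrized exponential
  have hkey : ∀ z : ↥r → L,
      ∑ zp ∈ Finset.univ.filter (fun zp : ↥p → L => res r p zp = z),
          Real.exp (repot θ E lam p zp / ε)
        = Real.exp ((lam r p z + mu ε θ E lam p r z) / ε) := by
    intro z
    have hdecomp : ∀ zp : ↥p → L, repot θ E lam p zp = A zp + lam r p (res r p zp) := by
      intro zp
      rw [repot, ← Finset.add_sum_erase _ _ hrc, hA]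
      ring
    have hterm : ∀ zp ∈ Finset.univ.filter (fun zp : ↥p → L => res r p zp = z),
        Real.exp (repot θ E lam p zp / ε)
          = Real.exp (lam r p z / ε) * Real.exp (A zp / ε) := by
      intro zp hzp
      have hres : res r p zp = z := (Finset.mem_filter.mp hzp).2
      rw [hdecomp zp, hres, ← Real.exp_add, add_div, add_comm]
    rw [Finset.sum_congr rfl hterm, ← Finset.mul_sum, ← hmu z, ← Real.exp_add, ← add_div]
  -- algebra from the fixed-point equation
  set n : ℝ := ((parents E r).card : ℝ) with hn
  have h1n : (1 : ℝ) + n ≠ 0 := by positivity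
  set X : (↥r → L) → ℝ := fun z =>
    θ r z + (∑ c ∈ children E r, lam c r (res c r z))
      + ∑ p' ∈ parents E r, mu ε θ E lam p' r z with hX
  have hlam_mu : ∀ z : ↥r → L,
      lam r p z + mu ε θ E lam p r z = (1 / (1 + n)) * X z := by
    intro z
    rw [hfix p hp z]
    ring
  have hrepot : ∀ z : ↥r → L, repot θ E lam r z = (1 / (1 + n)) * X z := by
    intro z
    have hsum : ∑ q ∈ parents E r, lam r q z
        = n * ((1 / (1 + n)) * X z) - ∑ q ∈ parents E r, mu ε θ E lam q r z := by
      rw [Finset.sum_congr rfl (fun q hq => hfix q hq z), Finset.sum_sub_distrib,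
        Finset.sum_const, nsmul_eq_mul, hn]
    rw [repot, hsum]
    have hXz : X z
        = θ r z + (∑ c ∈ children E r, lam c r (res c r z))
          + ∑ p' ∈ parents E r, mu ε θ E lam p' r z := rfl
    field_simp
    rw [hXz]
    ring
  have hfiber : ∀ z : ↥r → L,
      ∑ zp ∈ Finset.univ.filter (fun zp : ↥p → L => res r p zp = z),
          Real.exp (repot θ E lam p zp / ε)
        = Real.exp (repot θ E lam r z / ε) := by
    intro z
    rw [hkey z, hlam_mu z, hrepot z]
  -- partition functions agree
  have hZ : ∑ zp : ↥p → L, Real.exp (repot θ E lam p zp / ε)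
      = ∑ z : ↥r → L, Real.exp (repot θ E lam r z / ε) := by
    rw [← Finset.sum_fiberwise Finset.univ (fun zp : ↥p → L => res r p zp)
      (fun zp => Real.exp (repot θ E lam p zp / ε))]
    exact Finset.sum_congr rfl fun z _ => hfiber z
  -- conclude
  unfold belief
  rw [← Finset.sum_div, hfiber z0, hZ]

end Stmt9
end
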